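/- Let X_{g₁}(s, X⁰) and X_{g₂}(s, X⁰) denote the Hamiltonian flows for two C² Hamiltonians H_{g₁} and H_{g₂} with the same initial condition X⁰, and define F(s) = X_{g₂}(t − s, X_{g₁}(s, X⁰)) for fixed t > 0. Then F(0) = X_{g₂}(t, X⁰), F(t) = X_{g₁}(t, X⁰), and hence X_{g₁}(t, X⁰) − X_{g₂}(t, X⁰) = ∫₀ᵗ F'(s) ds, where F'(s) = J_{g₂}(t−s, X_{g₁}(s, X⁰)) · (V_{g₁} − V_{g₂})(X_{g₁}(s, X⁰)), with J_{g₂}(τ, Y) = ∂X_{g₂}(τ, Y)/∂Y the Jacobian of the flow with respect to initial data, and V_g the Hamiltonian vector field of H_g. -/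

import Mathlib

/-!
Put `F(s) = X₂(t - s, X₁(s, X⁰))`, which interpolates between `X₂(t, X⁰)` and `X₁(t, X⁰)`.
By the chain rule `F'(s) = -∂_τ X₂(t - s, y) + J₂(t - s, y) V₁(y)` with `y = X₁(s, X⁰)`.
Differentiating the group law `X₂(τ + σ, y) = X₂(τ, X₂(σ, y))` at `σ = 0` gives
`∂_τ X₂(τ, y) = J₂(τ, y) V₂(y)`, so `F'(s) = J₂(t - s, y) (V₁ - V₂)(y)`, and the identity is the
fundamental theorem of calculus. The group law holds by uniqueness of integral curves of the
locally Lipschitz field `V₂`.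
-/

open InnerProductSpace Set Function

section HamiltonianVectorField

variable {E F : Type*} [NormedAddCommGroup E] [InnerProductSpace ℝ E]
  [NormedAddCommGroup F] [InnerProductSpace ℝ F] {H : E × F → ℝ}

theorem gradient_comp_prodMk_right [CompleteSpace F] {x : E} {y : F}
    (hH : DifferentiableAt ℝ H (x, y)) :
    gradient (fun q => H (x, q)) y =
      (toDual ℝ F).symm ((fderiv ℝ H (x, y)).comp (.inr ℝ E F)) :=
  congrArg _ (hH.hasFDerivAt.comp y (hasFDerivAt_prodMk_right x y)).fderiv

theorem gradient_comp_prodMk_left [CompleteSpace E] {x : E} {y : F}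
    (hH : DifferentiableAt ℝ H (x, y)) :
    gradient (fun q => H (q, y)) x =
      (toDual ℝ E).symm ((fderiv ℝ H (x, y)).comp (.inl ℝ E F)) :=
  congrArg _ (hH.hasFDerivAt.comp x (hasFDerivAt_prodMk_left x y)).fderiv

variable {n : WithTop ℕ∞}

theorem ContDiff.gradient_comp_prodMk_right [CompleteSpace F] (hH : ContDiff ℝ (n + 1) H) :
    ContDiff ℝ n fun p : E × F => gradient (fun q => H (p.1, q)) p.2 := by
  have hHd : Differentiable ℝ H := hH.differentiable (by simp)
  simp_rw [_root_.gradient_comp_prodMk_right (hHd _)]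
  exact (toDual ℝ F).symm.toLinearIsometry.contDiff.comp
    ((hH.fderiv_right le_rfl).clm_comp contDiff_const)

theorem ContDiff.gradient_comp_prodMk_left [CompleteSpace E] (hH : ContDiff ℝ (n + 1) H) :
    ContDiff ℝ n fun p : E × F => gradient (fun q => H (q, p.2)) p.1 := by
  have hHd : Differentiable ℝ H := hH.differentiable (by simp)
  simp_rw [_root_.gradient_comp_prodMk_left (hHd _)]
  exact (toDual ℝ E).symm.toLinearIsometry.contDiff.comp
    ((hH.fderiv_right le_rfl).clm_comp contDiff_const)

noncomputable def hamiltonianVectorField [CompleteSpace E] (H : E × E → ℝ) (p : E × E) :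
    E × E :=
  (gradient (fun q => H (p.1, q)) p.2, -gradient (fun q => H (q, p.2)) p.1)

theorem contDiff_hamiltonianVectorField [CompleteSpace E] {H : E × E → ℝ}
    (hH : ContDiff ℝ (n + 1) H) : ContDiff ℝ n (hamiltonianVectorField H) :=
  hH.gradient_comp_prodMk_right.prodMk hH.gradient_comp_prodMk_left.neg

end HamiltonianVectorField

theorem fderiv_uncurry_apply {𝕜 E F : Type*} [NontriviallyNormedField 𝕜]
    [NormedAddCommGroup E] [NormedSpace 𝕜 E] [NormedAddCommGroup F] [NormedSpace 𝕜 F]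
    {X : 𝕜 → E → F} {τ : 𝕜} {y : E} {A : F} {J : E →L[𝕜] F}
    (hX : DifferentiableAt 𝕜 (uncurry X) (τ, y)) (hτ : HasDerivAt (fun r => X r y) A τ)
    (hy : HasFDerivAt (X τ) J y) (r : 𝕜) (v : E) :
    fderiv 𝕜 (uncurry X) (τ, y) (r, v) = r • A + J v := by
  set D := fderiv 𝕜 (uncurry X) (τ, y)
  have hA : HasDerivAt (fun r => X r y) (D (1, 0)) τ :=
    hX.hasFDerivAt.comp_hasDerivAt (l := uncurry X) τ
      ((hasDerivAt_id' τ).prodMk (hasDerivAt_const τ y))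
  have hJ : D.comp (.inr 𝕜 𝕜 E) = J :=
    (hX.hasFDerivAt.comp y (hasFDerivAt_prodMk_right τ y)).unique hy
  calc D (r, v) = r • D (1, 0) + D.comp (.inr 𝕜 𝕜 E) v := by
        rw [ContinuousLinearMap.comp_apply, ← map_smul, ← map_add]; simp
    _ = r • A + J v := by rw [hA.unique hτ, hJ]

section Flow

variable {E : Type*} [NormedAddCommGroup E] [NormedSpace ℝ E]

theorem ODE_solution_unique_univ_of_locallyLipschitz {V : E → E} (hV : LocallyLipschitz V)
    {f g : ℝ → E} {t₀ : ℝ} (hf : ∀ t, HasDerivAt f (V (f t)) t)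
    (hg : ∀ t, HasDerivAt g (V (g t)) t) (heq : f t₀ = g t₀) : f = g := by
  ext t
  obtain ⟨a, b, ht, ht₀⟩ : ∃ a b, t ∈ Ioo a b ∧ t₀ ∈ Ioo a b :=
    ⟨min t t₀ - 1, max t t₀ + 1, by grind, by grind⟩
  have hfc : Continuous f := continuous_iff_continuousAt.2 fun t => (hf t).continuousAt
  have hgc : Continuous g := continuous_iff_continuousAt.2 fun t => (hg t).continuousAt
  obtain ⟨K, hK⟩ := hV.locallyLipschitzOn.exists_lipschitzOnWith_of_compact
    ((isCompact_Icc.image hfc).union (isCompact_Icc.image hgc))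
  exact ODE_solution_unique_of_mem_Ioo (fun _ _ => hK) ht₀
    (fun u hu => ⟨hf u, .inl (mem_image_of_mem f (Ioo_subset_Icc_self hu))⟩)
    (fun u hu => ⟨hg u, .inr (mem_image_of_mem g (Ioo_subset_Icc_self hu))⟩) heq ht

theorem flow_add {V : E → E} {X : ℝ → E → E} (hV : LocallyLipschitz V) (hX₀ : ∀ y, X 0 y = y)
    (hX : ∀ s y, HasDerivAt (fun τ => X τ y) (V (X s y)) s) (s σ : ℝ) (x : E) :
    X (s + σ) x = X s (X σ x) := by
  have hshift : ∀ u, HasDerivAt (fun u => X (u + σ) x) (V (X (u + σ) x)) u := fun u =>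
    (hX (u + σ) x).comp_add_const u σ
  exact congrFun (ODE_solution_unique_univ_of_locallyLipschitz hV hshift
    (fun u => hX u (X σ x)) (t₀ := 0) (by simp [hX₀])) s

theorem HasFDerivAt.flow_apply_vectorField {V : E → E} {X : ℝ → E → E}
    (hV : LocallyLipschitz V) (hX₀ : ∀ y, X 0 y = y)
    (hX : ∀ s y, HasDerivAt (fun τ => X τ y) (V (X s y)) s)
    {τ : ℝ} {x : E} {J : E →L[ℝ] E} (hJ : HasFDerivAt (X τ) J x) : J (V x) = V (X τ x) := by
  have hspace : HasDerivAt (fun σ => X τ (X σ x)) (J (V x)) 0 := by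
    have h₀ : HasDerivAt (fun σ => X σ x) (V x) 0 := by simpa only [hX₀] using hX 0 x
    rw [← hX₀ x] at hJ
    exact hJ.comp_hasDerivAt 0 h₀
  have htime : HasDerivAt (fun σ => X (τ + σ) x) (V (X τ x)) 0 := by
    simpa using (hX (τ + 0) x).comp_const_add τ 0
  simp_rw [flow_add hV hX₀ hX] at htime
  exact hspace.unique htime

variable {V₁ V₂ : E → E} {X₁ X₂ : ℝ → E → E} {J₂ : ℝ → E → E →L[ℝ] E}

theorem hasDerivAt_flow_comp_flow (hV₂ : LocallyLipschitz V₂)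
    (hX₁ : ∀ s y, HasDerivAt (fun τ => X₁ τ y) (V₁ (X₁ s y)) s) (hX₂₀ : ∀ y, X₂ 0 y = y)
    (hX₂ : ∀ s y, HasDerivAt (fun τ => X₂ τ y) (V₂ (X₂ s y)) s)
    (hX₂d : Differentiable ℝ (uncurry X₂)) (hJ₂ : ∀ s y, HasFDerivAt (X₂ s) (J₂ s y) y)
    (t : ℝ) (x : E) (s : ℝ) :
    HasDerivAt (fun s => X₂ (t - s) (X₁ s x))
      (J₂ (t - s) (X₁ s x) (V₁ (X₁ s x) - V₂ (X₁ s x))) s := by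
  have hchain := (hX₂d _).hasFDerivAt.comp_hasDerivAt (l := uncurry X₂) s
    (((hasDerivAt_id' s).const_sub t).prodMk (hX₁ s x))
  rwa [fderiv_uncurry_apply (hX₂d _) (hX₂ _ _) (hJ₂ _ _),
    ← (hJ₂ _ _).flow_apply_vectorField hV₂ hX₂₀ hX₂, ← map_smul, ← map_add, neg_one_smul,
    neg_add_eq_sub] at hchain

theorem flow_sub_flow_eq_integral [CompleteSpace E] (hV₁ : Continuous V₁) (hV₂ : LocallyLipschitz V₂)
    (hX₁₀ : ∀ y, X₁ 0 y = y) (hX₁ : ∀ s y, HasDerivAt (fun τ => X₁ τ y) (V₁ (X₁ s y)) s)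
    (hX₂₀ : ∀ y, X₂ 0 y = y) (hX₂ : ∀ s y, HasDerivAt (fun τ => X₂ τ y) (V₂ (X₂ s y)) s)
    (hX₂c : ContDiff ℝ 1 (uncurry X₂)) (hJ₂ : ∀ s y, HasFDerivAt (X₂ s) (J₂ s y) y)
    (t : ℝ) (x : E) :
    X₁ t x - X₂ t x = ∫ s in (0 : ℝ)..t, J₂ (t - s) (X₁ s x) (V₁ (X₁ s x) - V₂ (X₁ s x)) := by
  have hX₂d : Differentiable ℝ (uncurry X₂) := hX₂c.differentiable one_ne_zero
  have hJ₂_eq : ∀ τ y w, J₂ τ y w = fderiv ℝ (uncurry X₂) (τ, y) (0, w) := fun τ y w => by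
    rw [fderiv_uncurry_apply (hX₂d _) (hX₂ τ y) (hJ₂ τ y), zero_smul, zero_add]
  have hX₁c : Continuous fun s => X₁ s x :=
    continuous_iff_continuousAt.2 fun s => (hX₁ s x).continuousAt
  have hcont : Continuous fun s => J₂ (t - s) (X₁ s x) (V₁ (X₁ s x) - V₂ (X₁ s x)) := by
    simp_rw [hJ₂_eq]
    exact ((hX₂c.continuous_fderiv one_ne_zero).comp
      ((continuous_const.sub continuous_id).prodMk hX₁c)).clm_apply
      (continuous_const.prodMk ((hV₁.comp hX₁c).sub (hV₂.continuous.comp hX₁c)))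
  rw [intervalIntegral.integral_eq_sub_of_hasDerivAt
    (fun s _ => hasDerivAt_flow_comp_flow hV₂ hX₁ hX₂₀ hX₂ hX₂d hJ₂ t x s)
    (hcont.intervalIntegrable 0 t)]
  simp [hX₁₀, hX₂₀]

end Flow

theorem stmt_8_general {d : ℕ}
    (H₁ H₂ : EuclideanSpace ℝ (Fin d) × EuclideanSpace ℝ (Fin d) → ℝ)
    (hH₁ : ContDiff ℝ 2 H₁) (hH₂ : ContDiff ℝ 2 H₂)
    (V₁ V₂ : EuclideanSpace ℝ (Fin d) × EuclideanSpace ℝ (Fin d) →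
      EuclideanSpace ℝ (Fin d) × EuclideanSpace ℝ (Fin d))
    (hV₁ : ∀ p, V₁ p = (gradient (fun q => H₁ (p.1, q)) p.2,
      -gradient (fun q => H₁ (q, p.2)) p.1))
    (hV₂ : ∀ p, V₂ p = (gradient (fun q => H₂ (p.1, q)) p.2,
      -gradient (fun q => H₂ (q, p.2)) p.1))
    (X₁ X₂ : ℝ → EuclideanSpace ℝ (Fin d) × EuclideanSpace ℝ (Fin d) →
      EuclideanSpace ℝ (Fin d) × EuclideanSpace ℝ (Fin d))
    (hX₁0 : ∀ y, X₁ 0 y = y) (hX₂0 : ∀ y, X₂ 0 y = y)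
    (hX₁ : ∀ s y, HasDerivAt (fun τ => X₁ τ y) (V₁ (X₁ s y)) s)
    (hX₂ : ∀ s y, HasDerivAt (fun τ => X₂ τ y) (V₂ (X₂ s y)) s)
    (hX₂smooth : ContDiff ℝ 1 (fun p : ℝ ×
        (EuclideanSpace ℝ (Fin d) × EuclideanSpace ℝ (Fin d)) => X₂ p.1 p.2))
    (J₂ : ℝ → EuclideanSpace ℝ (Fin d) × EuclideanSpace ℝ (Fin d) →
      (EuclideanSpace ℝ (Fin d) × EuclideanSpace ℝ (Fin d)) →L[ℝ]
        (EuclideanSpace ℝ (Fin d) × EuclideanSpace ℝ (Fin d)))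
    (hJ₂ : ∀ s y, HasFDerivAt (X₂ s) (J₂ s y) y)
    (X0 : EuclideanSpace ℝ (Fin d) × EuclideanSpace ℝ (Fin d))
    (t : ℝ) :
    let F : ℝ → EuclideanSpace ℝ (Fin d) × EuclideanSpace ℝ (Fin d) :=
      fun s => X₂ (t - s) (X₁ s X0)
    F 0 = X₂ t X0 ∧ F t = X₁ t X0 ∧
      (∀ s, HasDerivAt F
        (J₂ (t - s) (X₁ s X0) (V₁ (X₁ s X0) - V₂ (X₁ s X0))) s) ∧
      X₁ t X0 - X₂ t X0 =
        ∫ s in (0 : ℝ)..t, J₂ (t - s) (X₁ s X0) (V₁ (X₁ s X0) - V₂ (X₁ s X0)) := by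
  intro F
  have hV₁c : Continuous V₁ := by
    rw [funext hV₁]; exact (contDiff_hamiltonianVectorField (n := 1) hH₁).continuous
  have hV₂l : LocallyLipschitz V₂ := by
    rw [funext hV₂]; exact (contDiff_hamiltonianVectorField (n := 1) hH₂).locallyLipschitz
  have hX₂d : Differentiable ℝ (uncurry X₂) := hX₂smooth.differentiable one_ne_zero
  exact ⟨by simp [F, hX₁0], by simp [F, hX₂0],
    hasDerivAt_flow_comp_flow hV₂l hX₁ hX₂0 hX₂ hX₂d hJ₂ t X0,
    flow_sub_flow_eq_integral hV₁c hV₂l hX₁0 hX₁ hX₂0 hX₂ hX₂smooth hJ₂ t X0⟩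

/-- The Stefanov–Uhlmann identity. For the Hamiltonian flows X₁, X₂ of two C²
Hamiltonians with vector fields V₁, V₂, and F(s) = X₂(t−s, X₁(s, X0)):
F(0) = X₂(t,X0), F(t) = X₁(t,X0), F'(s) = J₂(t−s, X₁(s,X0))·(V₁−V₂)(X₁(s,X0)), and
X₁(t,X0) − X₂(t,X0) = ∫₀ᵗ J₂(t−s, X₁(s,X0))·(V₁−V₂)(X₁(s,X0)) ds. -/
theorem stmt_8 {d : ℕ}
    (H₁ H₂ : EuclideanSpace ℝ (Fin d) × EuclideanSpace ℝ (Fin d) → ℝ)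
    (hH₁ : ContDiff ℝ 2 H₁) (hH₂ : ContDiff ℝ 2 H₂)
    (V₁ V₂ X₁ext X₂ext : EuclideanSpace ℝ (Fin d) × EuclideanSpace ℝ (Fin d) →
      EuclideanSpace ℝ (Fin d) × EuclideanSpace ℝ (Fin d))
    (hV₁ : ∀ p, V₁ p = (gradient (fun q => H₁ (p.1, q)) p.2,
      -gradient (fun q => H₁ (q, p.2)) p.1))
    (hV₂ : ∀ p, V₂ p = (gradient (fun q => H₂ (p.1, q)) p.2,
      -gradient (fun q => H₂ (q, p.2)) p.1))
    (X₁ X₂ : ℝ → EuclideanSpace ℝ (Fin d) × EuclideanSpace ℝ (Fin d) →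
      EuclideanSpace ℝ (Fin d) × EuclideanSpace ℝ (Fin d))
    (hX₁0 : ∀ y, X₁ 0 y = y) (hX₂0 : ∀ y, X₂ 0 y = y)
    (hX₁ : ∀ s y, HasDerivAt (fun τ => X₁ τ y) (V₁ (X₁ s y)) s)
    (hX₂ : ∀ s y, HasDerivAt (fun τ => X₂ τ y) (V₂ (X₂ s y)) s)
    (hX₂smooth : ContDiff ℝ 1 (fun p : ℝ ×
        (EuclideanSpace ℝ (Fin d) × EuclideanSpace ℝ (Fin d)) => X₂ p.1 p.2))
    (J₂ : ℝ → EuclideanSpace ℝ (Fin d) × EuclideanSpace ℝ (Fin d) →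
      (EuclideanSpace ℝ (Fin d) × EuclideanSpace ℝ (Fin d)) →L[ℝ]
        (EuclideanSpace ℝ (Fin d) × EuclideanSpace ℝ (Fin d)))
    (hJ₂ : ∀ s y, HasFDerivAt (X₂ s) (J₂ s y) y)
    (X0 : EuclideanSpace ℝ (Fin d) × EuclideanSpace ℝ (Fin d))
    (t : ℝ) (ht : 0 < t) :
    let F : ℝ → EuclideanSpace ℝ (Fin d) × EuclideanSpace ℝ (Fin d) :=
      fun s => X₂ (t - s) (X₁ s X0)
    F 0 = X₂ t X0 ∧ F t = X₁ t X0 ∧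
      (∀ s, HasDerivAt F
        (J₂ (t - s) (X₁ s X0) (V₁ (X₁ s X0) - V₂ (X₁ s X0))) s) ∧
      X₁ t X0 - X₂ t X0 =
        ∫ s in (0 : ℝ)..t, J₂ (t - s) (X₁ s X0) (V₁ (X₁ s X0) - V₂ (X₁ s X0)) :=
  stmt_8_general H₁ H₂ hH₁ hH₂ V₁ V₂ hV₁ hV₂ X₁ X₂ hX₁0 hX₂0 hX₁ hX₂ hX₂smooth J₂ hJ₂ X0 t
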